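/- arXiv:1903.04901 — 2 statements merged into one kernel-verified Lean document; each statement's English description precedes it below -/
import Mathlib

section
/- If X is a p-integrable random C-closed convex set, then the family L^p(X) of p-integrable selections of X is a nonempty convex subset of L^p(ℝ^d) that is closed in the weak topology σ(L^p, L^q) and satisfies L^p(X) + L^p(C) ⊆ L^p(X). -/
/-!
Convexity and stability under `+ C` hold pointwise. For weak closedness, let `η ω` be the
projection of `ξ ω` onto the closed convex hull of `{ξn n ω | n}`, which lies in `X ω`. It is
measurable, being the pointwise limit of approximate minimizers chosen among the countably many
rational convex combinations of the `ξn`. Since `⟪ξ - η, ξn n - η⟫ ≤ 0`, testing the weak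
convergence against the bounded function `ζ = (ξ - η) / (1 + ‖ξ - η‖)` gives
`E [‖ξ - η‖² / (1 + ‖ξ - η‖)] ≤ 0`, so `ξ = η ∈ X` almost surely.
-/

open MeasureTheory Set
open scoped ENNReal Pointwise InnerProductSpace

/-- The family of `p`-integrable selections of a random set `X`. -/
def LpSelections {Ω : Type*} [MeasurableSpace Ω] (μ : Measure Ω) (p : ℝ≥0∞)
    {d : ℕ} (X : Ω → Set (EuclideanSpace ℝ (Fin d))) :
    Set (Ω → EuclideanSpace ℝ (Fin d)) :=
  {ξ | MemLp ξ p μ ∧ ∀ᵐ ω ∂μ, ξ ω ∈ X ω}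

open Filter Topology

inductive RatConvexComb : Type
  | leaf : ℕ → RatConvexComb
  | node : Icc (0 : ℚ) 1 → RatConvexComb → RatConvexComb → RatConvexComb
  deriving Countable, Nonempty

theorem convex_closure_of_ratCast_combo_mem {E : Type*} [AddCommGroup E] [Module ℝ E]
    [TopologicalSpace E] [IsTopologicalAddGroup E] [ContinuousSMul ℝ E] {S : Set E}
    (hS : ∀ a ∈ S, ∀ b ∈ S, ∀ q ∈ Icc (0 : ℚ) 1, (q : ℝ) • a + (1 - (q : ℝ)) • b ∈ S) :
    Convex ℝ (closure S) := by
  have hdense : Icc (0 : ℝ) 1 ⊆ closure ((↑) '' Icc (0 : ℚ) 1) := by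
    rw [← closure_Ioo zero_ne_one]
    refine closure_minimal (Rat.denseRange_cast.open_subset_closure_inter isOpen_Ioo |>.trans
      (closure_mono ?_)) isClosed_closure
    rintro _ ⟨hx, q, rfl⟩
    exact ⟨q, ⟨by exact_mod_cast hx.1.le, by exact_mod_cast hx.2.le⟩, rfl⟩
  intro x hx y hy a b ha hb hab
  obtain rfl : b = 1 - a := by linarith
  have hxy : (x, y) ∈ closure (S ×ˢ S) := by rw [closure_prod_eq]; exact ⟨hx, hy⟩
  refine map_mem_closure₂ (f := fun (t : ℝ) (z : E × E) => t • z.1 + (1 - t) • z.2)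
    (by fun_prop) (hdense ⟨ha, by linarith⟩) hxy ?_
  rintro _ ⟨q, hq, rfl⟩ z ⟨hz₁, hz₂⟩
  exact hS _ hz₁ _ hz₂ q hq

namespace RatConvexComb

section

variable {E : Type*} [AddCommGroup E] [Module ℝ E]

def eval (x : ℕ → E) : RatConvexComb → E
  | leaf n => x n
  | node q l r => ((q : ℚ) : ℝ) • eval x l + (1 - ((q : ℚ) : ℝ)) • eval x r

theorem eval_mem {S : Set E} (hS : Convex ℝ S) {x : ℕ → E} (hx : ∀ n, x n ∈ S) :
    ∀ t, eval x t ∈ S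
  | leaf n => hx n
  | node q l r => hS (eval_mem hS hx l) (eval_mem hS hx r) (by exact_mod_cast q.2.1)
      (sub_nonneg.2 (by exact_mod_cast q.2.2)) (add_sub_cancel _ _)

theorem convex_closure_range_eval [TopologicalSpace E] [IsTopologicalAddGroup E]
    [ContinuousSMul ℝ E] (x : ℕ → E) : Convex ℝ (closure (range (eval x))) :=
  convex_closure_of_ratCast_combo_mem <| by
    rintro _ ⟨l, rfl⟩ _ ⟨r, rfl⟩ q hq
    exact ⟨node ⟨q, hq⟩ l r, rfl⟩

end

theorem measurable_eval {Ω E : Type*} [MeasurableSpace Ω] [NormedAddCommGroup E]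
    [NormedSpace ℝ E] [MeasurableSpace E] [BorelSpace E] [SecondCountableTopology E]
    {f : ℕ → Ω → E} (hf : ∀ n, Measurable (f n)) :
    ∀ t, Measurable fun ω => eval (fun n => f n ω) t
  | leaf n => hf n
  | node _ l r => ((measurable_eval hf l).const_smul _).add ((measurable_eval hf r).const_smul _)

end RatConvexComb

section Projection

variable {E : Type*} [NormedAddCommGroup E] [InnerProductSpace ℝ E]

theorem norm_sub_sq_add_norm_sub_sq_le_of_real_inner_le_zero {u v w : E}
    (h : ⟪u - v, w - v⟫_ℝ ≤ 0) : ‖u - v‖ ^ 2 + ‖w - v‖ ^ 2 ≤ ‖u - w‖ ^ 2 := by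
  have : u - w = (u - v) - (w - v) := by abel
  rw [this, norm_sub_sq_real (u - v) (w - v)]
  linarith

theorem norm_sub_le_norm_sub_of_real_inner_le_zero {u v w : E}
    (h : ⟪u - v, w - v⟫_ℝ ≤ 0) : ‖u - v‖ ≤ ‖u - w‖ := by
  have := norm_sub_sq_add_norm_sub_sq_le_of_real_inner_le_zero h
  nlinarith [norm_nonneg (u - v), norm_nonneg (u - w), sq_nonneg ‖w - v‖]

theorem tendsto_of_tendsto_norm_sub_of_real_inner_le_zero {ι : Type*} {l : Filter ι} {K : Set E}
    {u v : E} (hv : ∀ w ∈ K, ⟪u - v, w - v⟫_ℝ ≤ 0) {y : ι → E} (hy : ∀ i, y i ∈ K)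
    (hlim : Tendsto (fun i => ‖u - y i‖) l (𝓝 ‖u - v‖)) : Tendsto y l (𝓝 v) := by
  rw [tendsto_iff_norm_sub_tendsto_zero]
  have hsq : Tendsto (fun i => √(‖u - y i‖ ^ 2 - ‖u - v‖ ^ 2)) l (𝓝 0) := by
    have := ((hlim.pow 2).sub_const (‖u - v‖ ^ 2)).sqrt
    rwa [sub_self, Real.sqrt_zero] at this
  refine squeeze_zero (fun _ => norm_nonneg _) (fun i => ?_) hsq
  refine Real.le_sqrt_of_sq_le ?_
  linarith [norm_sub_sq_add_norm_sub_sq_le_of_real_inner_le_zero (hv _ (hy i))]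

end Projection

theorem exists_forall_norm_sub_lt_add {E : Type*} [SeminormedAddCommGroup E] {s : ℕ → E}
    {u v : E} (hv : v ∈ closure (range s)) (hmin : ∀ j, ‖u - v‖ ≤ ‖u - s j‖) {ε : ℝ}
    (hε : 0 < ε) : ∃ k, ∀ j, ‖u - s k‖ < ‖u - s j‖ + ε := by
  obtain ⟨k, hk⟩ := Metric.mem_closure_range_iff.1 hv ε hε
  refine ⟨k, fun j => ?_⟩
  calc ‖u - s k‖ ≤ ‖u - v‖ + ‖v - s k‖ := norm_sub_le_norm_sub_add_norm_sub _ _ _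
    _ < ‖u - v‖ + ε := by gcongr; rwa [← dist_eq_norm]
    _ ≤ ‖u - s j‖ + ε := by gcongr; exact hmin j

theorem norm_sub_le_add_of_forall_lt_add {E : Type*} [SeminormedAddCommGroup E] {s : ℕ → E}
    {u v y : E} {ε : ℝ} (hy : ∀ j, ‖u - y‖ < ‖u - s j‖ + ε) (hv : v ∈ closure (range s)) :
    ‖u - y‖ ≤ ‖u - v‖ + ε := by
  have hclosed : IsClosed {w | ‖u - y‖ - ε ≤ ‖u - w‖} := isClosed_le continuous_const (by fun_prop)
  have : ‖u - y‖ - ε ≤ ‖u - v‖ := closure_minimal (t := {w | ‖u - y‖ - ε ≤ ‖u - w‖})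
    (range_subset_iff.2 fun j => show ‖u - y‖ - ε ≤ ‖u - s j‖ by linarith [hy j]) hclosed hv
  linarith

theorem exists_measurable_proj_closure_range {Ω E : Type*} [MeasurableSpace Ω]
    [NormedAddCommGroup E] [InnerProductSpace ℝ E] [CompleteSpace E] [MeasurableSpace E]
    [BorelSpace E] [SecondCountableTopology E] {s : ℕ → Ω → E} (hs : ∀ k, Measurable (s k))
    (hK : ∀ ω, Convex ℝ (closure (range fun k => s k ω))) {f : Ω → E} (hf : Measurable f) :
    ∃ η : Ω → E, Measurable η ∧ ∀ ω, η ω ∈ closure (range fun k => s k ω) ∧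
      ∀ k, ⟪f ω - η ω, s k ω - η ω⟫_ℝ ≤ 0 := by
  classical
  have hproj ω := exists_norm_eq_iInf_of_complete_convex (range_nonempty _).closure
    isClosed_closure.isComplete (hK ω) (f ω)
  choose η hηK hηmin using hproj
  have hvar ω : ∀ w ∈ closure (range fun k => s k ω), ⟪f ω - η ω, w - η ω⟫_ℝ ≤ 0 :=
    (norm_eq_iInf_iff_real_inner_le_zero (hK ω) (hηK ω)).1 (hηmin ω)
  have hvar_s ω k : ⟪f ω - η ω, s k ω - η ω⟫_ℝ ≤ 0 :=
    hvar ω _ (subset_closure (mem_range_self k))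
  -- `η` is measurable as the pointwise limit of measurably chosen approximate minimizers
  have happrox (m : ℕ) ω : ∃ k, ∀ j, ‖f ω - s k ω‖ < ‖f ω - s j ω‖ + 1 / (m + 1) :=
    exists_forall_norm_sub_lt_add (hηK ω)
      (fun j => norm_sub_le_norm_sub_of_real_inner_le_zero (hvar_s ω j)) Nat.one_div_pos_of_nat
  refine ⟨η, measurable_of_tendsto_metrizable (f := fun m ω => s (Nat.find (happrox m ω)) ω)
    (fun m => ?_) (tendsto_pi_nhds.2 fun ω => ?_), fun ω => ⟨hηK ω, hvar_s ω⟩⟩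
  · refine Measurable.find hs (fun k => ?_) (happrox m)
    simp only [ofPred_forall]
    exact .iInter fun j => measurableSet_lt (hf.sub (hs k)).norm ((hf.sub (hs j)).norm.add_const _)
  · refine tendsto_of_tendsto_norm_sub_of_real_inner_le_zero (hvar ω)
      (fun m => subset_closure (mem_range_self _)) ?_
    have hupper := tendsto_const_nhds (x := ‖f ω - η ω‖) |>.add
      tendsto_one_div_add_atTop_nhds_zero_nat
    rw [add_zero] at hupper
    exact tendsto_of_tendsto_of_tendsto_of_le_of_le tendsto_const_nhds hupper
      (fun m => norm_sub_le_norm_sub_of_real_inner_le_zero (hvar_s ω _))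
      (fun m => norm_sub_le_add_of_forall_lt_add (Nat.find_spec (happrox m ω)) (hηK ω))

section WeakClosedness

variable {Ω E : Type*} [MeasurableSpace Ω] {μ : Measure Ω} [NormedAddCommGroup E]
  [InnerProductSpace ℝ E]

theorem continuous_inv_one_add_norm_smul : Continuous fun v : E => (1 + ‖v‖)⁻¹ • v :=
  ((continuous_const.add continuous_norm).inv₀ fun v =>
    (add_pos_of_pos_of_nonneg one_pos (norm_nonneg v)).ne').smul continuous_id

theorem norm_inv_one_add_norm_smul_le_one (v : E) : ‖(1 + ‖v‖)⁻¹ • v‖ ≤ 1 := by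
  rw [norm_smul, norm_inv, Real.norm_of_nonneg (by positivity), inv_mul_le_one₀ (by positivity)]
  linarith

theorem MeasureTheory.Integrable.real_inner_of_norm_le {h ζ : Ω → E} (hh : Integrable h μ)
    (hζ : AEStronglyMeasurable ζ μ) {C : ℝ} (hC : ∀ ω, ‖ζ ω‖ ≤ C) :
    Integrable (fun ω => ⟪h ω, ζ ω⟫_ℝ) μ := by
  refine (hh.norm.mul_const C).mono' (hh.1.inner hζ) (ae_of_all _ fun ω => ?_)
  calc ‖⟪h ω, ζ ω⟫_ℝ‖ ≤ ‖h ω‖ * ‖ζ ω‖ := norm_inner_le_norm _ _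
    _ ≤ ‖h ω‖ * C := by gcongr; exact hC ω

theorem ae_eq_of_tendsto_integral_inner_of_real_inner_le_zero {ξn : ℕ → Ω → E} {ξ η : Ω → E}
    (hξn : ∀ n, Integrable (ξn n) μ) (hξ : Integrable ξ μ) (hη : AEStronglyMeasurable η μ)
    (hvar : ∀ n, ∀ᵐ ω ∂μ, ⟪ξ ω - η ω, ξn n ω - η ω⟫_ℝ ≤ 0)
    (hlim : ∀ ζ : Ω → E, MemLp ζ ∞ μ → Tendsto (fun n => ∫ ω, ⟪ξn n ω, ζ ω⟫_ℝ ∂μ) atTop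
      (𝓝 (∫ ω, ⟪ξ ω, ζ ω⟫_ℝ ∂μ))) :
    ξ =ᵐ[μ] η := by
  set g : Ω → E := fun ω => ξ ω - η ω
  have hg : Integrable g μ := (hξ.sub (hξn 0)).mono (hξ.1.sub hη) <| by
    filter_upwards [hvar 0] with ω h
    simpa using norm_sub_le_norm_sub_of_real_inner_le_zero h
  have hη_int : Integrable η μ := (hξ.sub hg).congr (ae_of_all _ fun ω => sub_sub_cancel _ _)
  set ζ : Ω → E := fun ω => (1 + ‖g ω‖)⁻¹ • g ω
  have hζ_meas : AEStronglyMeasurable ζ μ :=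
    continuous_inv_one_add_norm_smul.comp_aestronglyMeasurable hg.1
  have hζ_le ω : ‖ζ ω‖ ≤ 1 := norm_inv_one_add_norm_smul_le_one (g ω)
  have hgζ ω : ⟪g ω, ζ ω⟫_ℝ = (1 + ‖g ω‖)⁻¹ * ‖g ω‖ ^ 2 := by
    rw [real_inner_smul_right, real_inner_self_eq_norm_sq]
  have hint {h : Ω → E} (hh : Integrable h μ) := hh.real_inner_of_norm_le hζ_meas hζ_le
  have hle n : ∫ ω, ⟪ξn n ω, ζ ω⟫_ℝ ∂μ ≤ ∫ ω, ⟪η ω, ζ ω⟫_ℝ ∂μ := by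
    refine integral_mono_ae (hint (hξn n)) (hint hη_int) ?_
    filter_upwards [hvar n] with ω h
    have : ⟪ξn n ω - η ω, ζ ω⟫_ℝ ≤ 0 := by
      rw [real_inner_smul_right, real_inner_comm]
      exact mul_nonpos_of_nonneg_of_nonpos (by positivity) h
    rw [inner_sub_left] at this
    linarith
  have hgζ_int : ∫ ω, ⟪g ω, ζ ω⟫_ℝ ∂μ ≤ 0 := by
    have := le_of_tendsto' (hlim ζ (memLp_top_of_bound hζ_meas 1 (ae_of_all _ hζ_le))) hle
    simp only [g, inner_sub_left]
    rw [integral_sub (hint hξ) (hint hη_int)]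
    linarith
  have hgζ_nonneg : 0 ≤ fun ω => ⟪g ω, ζ ω⟫_ℝ := fun ω =>
    show 0 ≤ ⟪g ω, ζ ω⟫_ℝ by rw [hgζ]; positivity
  have hgζ_zero := (integral_eq_zero_iff_of_nonneg hgζ_nonneg (hint hg)).1
    (le_antisymm hgζ_int (integral_nonneg hgζ_nonneg))
  filter_upwards [hgζ_zero] with ω h
  rw [Pi.zero_apply, hgζ, mul_eq_zero, inv_eq_zero, sq_eq_zero_iff, norm_eq_zero, sub_eq_zero]
    at h
  exact h.resolve_left (by positivity)

end WeakClosedness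

theorem ae_mem_of_tendsto_integral_inner {Ω E : Type*} [MeasurableSpace Ω] {μ : Measure Ω}
    [NormedAddCommGroup E] [InnerProductSpace ℝ E] [CompleteSpace E] [MeasurableSpace E]
    [BorelSpace E] [SecondCountableTopology E] {X : Ω → Set E}
    (hX : ∀ᵐ ω ∂μ, IsClosed (X ω) ∧ Convex ℝ (X ω)) {ξn : ℕ → Ω → E} {ξ : Ω → E}
    (hξn : ∀ n, Integrable (ξn n) μ) (hξ : Integrable ξ μ) (hξn_mem : ∀ n, ∀ᵐ ω ∂μ, ξn n ω ∈ X ω)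
    (hlim : ∀ ζ : Ω → E, MemLp ζ ∞ μ → Tendsto (fun n => ∫ ω, ⟪ξn n ω, ζ ω⟫_ℝ ∂μ) atTop
      (𝓝 (∫ ω, ⟪ξ ω, ζ ω⟫_ℝ ∂μ))) :
    ∀ᵐ ω ∂μ, ξ ω ∈ X ω := by
  set ξn' : ℕ → Ω → E := fun n => (hξn n).1.mk (ξn n)
  have hξn' : ∀ᵐ ω ∂μ, ∀ n, ξn n ω = ξn' n ω := ae_all_iff.2 fun n => (hξn n).1.ae_eq_mk
  obtain ⟨u, hu⟩ := exists_surjective_nat RatConvexComb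
  set s : ℕ → Ω → E := fun k ω => (u k).eval fun n => ξn' n ω
  have hK ω : closure (range fun k => s k ω) =
      closure (range (RatConvexComb.eval fun n => ξn' n ω)) := by
    rw [← hu.range_comp]
    rfl
  obtain ⟨η, hη_meas, hη⟩ := exists_measurable_proj_closure_range
    (fun k => RatConvexComb.measurable_eval (fun n => (hξn n).1.stronglyMeasurable_mk.measurable)
      (u k))
    (fun ω => hK ω ▸ RatConvexComb.convex_closure_range_eval _)
    hξ.1.stronglyMeasurable_mk.measurable
  have hηX : ∀ᵐ ω ∂μ, η ω ∈ X ω := by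
    filter_upwards [hX, hξn', ae_all_iff.2 hξn_mem] with ω hXω hω hmem
    refine closure_minimal (range_subset_iff.2 fun k => ?_) hXω.1 (hη ω).1
    exact RatConvexComb.eval_mem hXω.2 (fun n => show ξn' n ω ∈ X ω from hω n ▸ hmem n) _
  have hvar n : ∀ᵐ ω ∂μ, ⟪ξ ω - η ω, ξn n ω - η ω⟫_ℝ ≤ 0 := by
    obtain ⟨k, hk⟩ := hu (.leaf n)
    filter_upwards [hξ.1.ae_eq_mk, hξn'] with ω hξω hω
    rw [hξω, hω n]
    simpa [s, hk, RatConvexComb.eval] using (hη ω).2 k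
  filter_upwards [ae_eq_of_tendsto_integral_inner_of_real_inner_le_zero hξn hξ
    hη_meas.aestronglyMeasurable hvar hlim, hηX] with ω hξη hηω
  exact hξη ▸ hηω

section LpSelections

variable {Ω : Type*} [MeasurableSpace Ω] {μ : Measure Ω} {p : ℝ≥0∞} {d : ℕ}
  {X : Ω → Set (EuclideanSpace ℝ (Fin d))} {ξ η : Ω → EuclideanSpace ℝ (Fin d)}

theorem smul_add_smul_mem_LpSelections (hX : ∀ᵐ ω ∂μ, Convex ℝ (X ω))
    (hξ : ξ ∈ LpSelections μ p X) (hη : η ∈ LpSelections μ p X) {t : ℝ} (ht₀ : 0 ≤ t)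
    (ht₁ : t ≤ 1) : (fun ω => t • ξ ω + (1 - t) • η ω) ∈ LpSelections μ p X := by
  refine ⟨(hξ.1.const_smul t).add (hη.1.const_smul (1 - t)), ?_⟩
  filter_upwards [hξ.2, hη.2, hX] with ω hξω hηω hXω
  exact hXω hξω hηω ht₀ (sub_nonneg.2 ht₁) (add_sub_cancel _ _)

theorem add_mem_LpSelections {C : Set (EuclideanSpace ℝ (Fin d))}
    (hX : ∀ᵐ ω ∂μ, X ω + C ⊆ X ω) (hξ : ξ ∈ LpSelections μ p X)
    (hη : η ∈ LpSelections μ p fun _ => C) : (fun ω => ξ ω + η ω) ∈ LpSelections μ p X := by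
  refine ⟨hξ.1.add hη.1, ?_⟩
  filter_upwards [hξ.2, hη.2, hX] with ω hξω hηω hXω
  exact hXω (add_mem_add hξω hηω)

theorem mem_LpSelections_of_tendsto_integral_inner [IsFiniteMeasure μ] (hp : 1 ≤ p) {q : ℝ≥0∞}
    (hX : ∀ᵐ ω ∂μ, IsClosed (X ω) ∧ Convex ℝ (X ω)) {ξn : ℕ → Ω → EuclideanSpace ℝ (Fin d)}
    (hξn : ∀ n, ξn n ∈ LpSelections μ p X) (hξ : MemLp ξ p μ)
    (hlim : ∀ ζ : Ω → EuclideanSpace ℝ (Fin d), MemLp ζ q μ →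
      Tendsto (fun n => ∫ ω, ⟪ξn n ω, ζ ω⟫_ℝ ∂μ) atTop (𝓝 (∫ ω, ⟪ξ ω, ζ ω⟫_ℝ ∂μ))) :
    ξ ∈ LpSelections μ p X :=
  ⟨hξ, ae_mem_of_tendsto_integral_inner hX (fun n => (hξn n).1.integrable hp) (hξ.integrable hp)
    (fun n => (hξn n).2) fun ζ hζ => hlim ζ (hζ.mono_exponent le_top)⟩

end LpSelections

theorem LpSelections_nonempty_convex_closed_general
    {Ω : Type*} [MeasurableSpace Ω] (μ : Measure Ω) [IsProbabilityMeasure μ]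
    {d : ℕ} (p q : ℝ≥0∞) (hpq : 1/p + 1/q = 1)
    (C : Set (EuclideanSpace ℝ (Fin d)))
    (X : Ω → Set (EuclideanSpace ℝ (Fin d)))
    (hXcl : ∀ᵐ ω ∂μ, IsClosed (X ω) ∧ Convex ℝ (X ω) ∧ X ω + C = X ω)
    (hXint : (LpSelections μ p X).Nonempty) :
    (LpSelections μ p X).Nonempty ∧
    (∀ ξ η : Ω → EuclideanSpace ℝ (Fin d), ξ ∈ LpSelections μ p X →
      η ∈ LpSelections μ p X → ∀ t : ℝ, 0 ≤ t → t ≤ 1 →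
      (fun ω => t • ξ ω + (1 - t) • η ω) ∈ LpSelections μ p X) ∧
    (∀ ξ γ : Ω → EuclideanSpace ℝ (Fin d), ξ ∈ LpSelections μ p X →
      γ ∈ LpSelections μ p (fun _ => C) → (fun ω => ξ ω + γ ω) ∈ LpSelections μ p X) ∧
    (∀ (ξn : ℕ → (Ω → EuclideanSpace ℝ (Fin d))) (ξ : Ω → EuclideanSpace ℝ (Fin d)),
      (∀ n, ξn n ∈ LpSelections μ p X) → MemLp ξ p μ →
      (∀ ζ : Ω → EuclideanSpace ℝ (Fin d), MemLp ζ q μ →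
        Filter.Tendsto (fun n => ∫ ω, ⟪ξn n ω, ζ ω⟫_ℝ ∂μ) Filter.atTop
          (nhds (∫ ω, ⟪ξ ω, ζ ω⟫_ℝ ∂μ))) →
      ξ ∈ LpSelections μ p X) := by
  have : p.HolderConjugate q := ENNReal.holderConjugate_iff.2 (by simpa only [one_div] using hpq)
  have hp : 1 ≤ p := ENNReal.HolderConjugate.one_le p q
  refine ⟨hXint, fun ξ η hξ hη t ht₀ ht₁ => ?_, fun ξ γ hξ hγ => ?_, fun ξn ξ hξn hξ hlim => ?_⟩
  · exact smul_add_smul_mem_LpSelections (hXcl.mono fun _ h => h.2.1) hξ hη ht₀ ht₁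
  · exact add_mem_LpSelections (hXcl.mono fun _ h => h.2.2.subset) hξ hγ
  · exact mem_LpSelections_of_tendsto_integral_inner hp (hXcl.mono fun _ h => ⟨h.1, h.2.1⟩)
      hξn hξ hlim

/-- for a `p`-integrable random `C`-closed convex set `X`, the family
`L^p(X)` of its `p`-integrable selections is nonempty, convex, closed under addition of
`p`-integrable selections of `C`, and closed with respect to weak `σ(L^p,L^q)` convergence. -/
theorem LpSelections_nonempty_convex_closed
    {Ω : Type*} [MeasurableSpace Ω] (μ : Measure Ω) [IsProbabilityMeasure μ]
    {d : ℕ} (p q : ℝ≥0∞) (hpq : 1/p + 1/q = 1)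
    (C : Set (EuclideanSpace ℝ (Fin d))) (hC : IsClosed C) (hCconv : Convex ℝ C)
    (hCcone : ∀ c : ℝ, 0 < c → c • C = C)
    (X : Ω → Set (EuclideanSpace ℝ (Fin d)))
    (hXcl : ∀ᵐ ω ∂μ, IsClosed (X ω) ∧ Convex ℝ (X ω) ∧ X ω + C = X ω)
    (hXint : (LpSelections μ p X).Nonempty) :
    (LpSelections μ p X).Nonempty ∧
    (∀ ξ η : Ω → EuclideanSpace ℝ (Fin d), ξ ∈ LpSelections μ p X →
      η ∈ LpSelections μ p X → ∀ t : ℝ, 0 ≤ t → t ≤ 1 →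
      (fun ω => t • ξ ω + (1 - t) • η ω) ∈ LpSelections μ p X) ∧
    (∀ ξ γ : Ω → EuclideanSpace ℝ (Fin d), ξ ∈ LpSelections μ p X →
      γ ∈ LpSelections μ p (fun _ => C) → (fun ω => ξ ω + γ ω) ∈ LpSelections μ p X) ∧
    (∀ (ξn : ℕ → (Ω → EuclideanSpace ℝ (Fin d))) (ξ : Ω → EuclideanSpace ℝ (Fin d)),
      (∀ n, ξn n ∈ LpSelections μ p X) → MemLp ξ p μ →
      (∀ ζ : Ω → EuclideanSpace ℝ (Fin d), MemLp ζ q μ →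
        Filter.Tendsto (fun n => ∫ ω, ⟪ξn n ω, ζ ω⟫_ℝ ∂μ) Filter.atTop
          (nhds (∫ ω, ⟪ξ ω, ζ ω⟫_ℝ ∂μ))) →
      ξ ∈ LpSelections μ p X) :=
  LpSelections_nonempty_convex_closed_general μ p q hpq C X hXcl hXint
end

section
/- Every σ(L^p, L^q)-lower semicontinuous vector-valued sublinear expectation ē : L^p(ℝ^d) → ℝ^d marginalises: there exist numerical sublinear expectations e₁,…,e_d such that ē(ξ) = (e₁(ξ₁), …, e_d(ξ_d)) for all ξ = (ξ₁,…,ξ_d). -/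
/-!
Only the `i`-th coordinate of `ξ` matters for `ē(ξ)ᵢ`. If `ζᵢ ≤ 0`, the truncations `ζ ∧ n` lie
below the deterministic vector with `0` in place `i` and `n` elsewhere, so `ē(ζ ∧ n)ᵢ ≤ 0`; by
dominated convergence they tend to `ζ` in `σ(Lᵖ, L^q)`, so lower semicontinuity gives `ē(ζ)ᵢ ≤ 0`.
Subadditivity, `ē(ξ)ᵢ ≤ ē(η)ᵢ + ē(ξ - η)ᵢ`, then yields `ē(ξ)ᵢ ≤ ē(η)ᵢ` whenever `ξᵢ ≤ ηᵢ`, and the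
marginals are `eᵢ(β) = ē(Pi.single i β)ᵢ`.
-/

open MeasureTheory Filter
open scoped ENNReal Topology

section

variable {Ω ι : Type*} [MeasurableSpace Ω] {μ : Measure Ω} {p q : ℝ≥0∞}

lemma abs_min_le_abs_of_nonneg {α : Type*} [AddCommGroup α] [LinearOrder α] [IsOrderedAddMonoid α]
    (a : α) {c : α} (hc : 0 ≤ c) : |min a c| ≤ |a| := by
  rcases le_total a c with h | h
  · rw [min_eq_left h]
  · rw [min_eq_right h, abs_of_nonneg hc]
    exact h.trans (le_abs_self a)

namespace MeasureTheory

lemma MemLp.min_const {f : Ω → ℝ} (hf : MemLp f p μ) {c : ℝ} (hc : 0 ≤ c) :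
    MemLp (fun ω => min (f ω) c) p μ := by
  refine hf.of_le (hf.1.inf aestronglyMeasurable_const) (ae_of_all _ fun ω => ?_)
  simpa only [Real.norm_eq_abs] using abs_min_le_abs_of_nonneg (f ω) hc

lemma MemLp.pi_min_const [Fintype ι] {f : Ω → ι → ℝ} (hf : MemLp f p μ) {c : ℝ} (hc : 0 ≤ c) :
    MemLp (fun ω i => min (f ω i) c) p μ :=
  MemLp.of_eval fun i => MemLp.min_const (hf.eval i) hc

lemma MemLp.piSingle [DecidableEq ι] [Fintype ι] {f : Ω → ℝ} (hf : MemLp f p μ) (i : ι) :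
    MemLp (fun ω => Pi.single i (f ω) : Ω → ι → ℝ) p μ :=
  MemLp.of_eval fun j => by
    rcases eq_or_ne j i with rfl | hj
    · simpa using hf
    · simp [hj]

lemma tendsto_integral_min_nat_mul {f g : Ω → ℝ} (hf : MemLp f p μ) (hg : MemLp g q μ)
    [p.HolderConjugate q] :
    Tendsto (fun n : ℕ => ∫ ω, min (f ω) n * g ω ∂μ) atTop (𝓝 (∫ ω, f ω * g ω ∂μ)) := by
  refine tendsto_integral_of_dominated_convergence (fun ω => |f ω * g ω|)
    (fun n => ((hf.min_const n.cast_nonneg).integrable_mul hg).aestronglyMeasurable)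
    (hf.integrable_mul hg).abs (fun n => ae_of_all _ fun ω => ?_) (ae_of_all _ fun ω => ?_)
  · rw [Real.norm_eq_abs, abs_mul, abs_mul]
    exact mul_le_mul_of_nonneg_right (abs_min_le_abs_of_nonneg _ n.cast_nonneg) (abs_nonneg _)
  · refine tendsto_const_nhds.congr' ?_
    filter_upwards [eventually_ge_atTop ⌈f ω⌉₊] with n hn
    rw [min_eq_left ((Nat.le_ceil _).trans (Nat.cast_le.2 hn))]

lemma tendsto_integral_sum_min_nat_mul [Fintype ι] {f g : Ω → ι → ℝ} (hf : MemLp f p μ)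
    (hg : MemLp g q μ) [p.HolderConjugate q] :
    Tendsto (fun n : ℕ => ∫ ω, ∑ i, min (f ω i) n * g ω i ∂μ) atTop
      (𝓝 (∫ ω, ∑ i, f ω i * g ω i ∂μ)) := by
  have hmul : ∀ (h : Ω → ι → ℝ), MemLp h p μ → ∀ i ∈ Finset.univ,
      Integrable (fun ω => h ω i * g ω i) μ := fun h hh i _ =>
    (hh.eval i).integrable_mul (hg.eval i)
  rw [integral_finsetSum _ (hmul f hf)]
  refine (tendsto_finsetSum _ fun i _ => tendsto_integral_min_nat_mul (hf.eval i) (hg.eval i)).congr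
    fun n => (integral_finsetSum _ (hmul _ (hf.pi_min_const n.cast_nonneg))).symm

end MeasureTheory

section

variable (μ p q) [Fintype ι]

def LpMonotone (E : (Ω → ι → ℝ) → ι → ℝ) : Prop :=
  ∀ ξ η : Ω → ι → ℝ, MemLp ξ p μ → MemLp η p μ →
    (∀ᵐ ω ∂μ, ∀ i, ξ ω i ≤ η ω i) → ∀ i, E ξ i ≤ E η i

def LpSubadditive (E : (Ω → ι → ℝ) → ι → ℝ) : Prop :=
  ∀ ξ η : Ω → ι → ℝ, MemLp ξ p μ → MemLp η p μ →
    ∀ i, E (fun ω i => ξ ω i + η ω i) i ≤ E ξ i + E η i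

/-- Sequential lower semicontinuity for `σ(Lᵖ, L^q)`, paired by `⟨ξ, ζ⟩ = ∫ ∑ i, ξ i * ζ i`. -/
def WeakLowerSemicontinuous (E : (Ω → ι → ℝ) → ι → ℝ) : Prop :=
  ∀ (ξn : ℕ → Ω → ι → ℝ) (ξ : Ω → ι → ℝ), (∀ n, MemLp (ξn n) p μ) → MemLp ξ p μ →
    (∀ ζ : Ω → ι → ℝ, MemLp ζ q μ →
      Tendsto (fun n => ∫ ω, ∑ i, ξn n ω i * ζ ω i ∂μ) atTop (𝓝 (∫ ω, ∑ i, ξ ω i * ζ ω i ∂μ))) →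
    ∀ i, E ξ i ≤ liminf (fun n => E (ξn n) i) atTop

end

namespace VectorExpectation

variable [Fintype ι] {E : (Ω → ι → ℝ) → ι → ℝ}

theorem apply_nonpos_of_ae_apply_nonpos [IsFiniteMeasure μ] [p.HolderConjugate q]
    (h_const : ∀ x, E (fun _ => x) = x) (h_mono : LpMonotone μ p E)
    (h_lsc : WeakLowerSemicontinuous μ p q E) {ζ : Ω → ι → ℝ} (hζ : MemLp ζ p μ) {i : ι}
    (hi : ∀ᵐ ω ∂μ, ζ ω i ≤ 0) : E ζ i ≤ 0 := by
  classical
  set ζn : ℕ → Ω → ι → ℝ := fun n ω j => min (ζ ω j) n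
  have hζn : ∀ n, MemLp (ζn n) p μ := fun n => hζ.pi_min_const n.cast_nonneg
  have hζn_nonpos : ∀ n, E (ζn n) i ≤ 0 := fun n =>
    calc E (ζn n) i ≤ E (fun _ => Function.update (fun _ => (n : ℝ)) i 0) i := by
          refine h_mono _ _ (hζn n) (memLp_const _) ?_ i
          filter_upwards [hi] with ω hω j
          rcases eq_or_ne j i with rfl | hj
          · simpa [ζn] using Or.inl hω
          · simp [ζn, hj]
      _ = 0 := by simp [h_const]
  calc E ζ i ≤ liminf (fun n => E (ζn n) i) atTop :=
        h_lsc ζn ζ hζn hζ (fun g hg => tendsto_integral_sum_min_nat_mul hζ hg) i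
    _ ≤ 0 := by
        rw [liminf_eq]
        exact Real.sSup_le (fun b hb => hb.exists.elim fun n hn => hn.trans (hζn_nonpos n)) le_rfl

theorem apply_le_apply_of_ae_apply_le [IsFiniteMeasure μ] [p.HolderConjugate q]
    (h_const : ∀ x, E (fun _ => x) = x) (h_mono : LpMonotone μ p E)
    (h_subadd : LpSubadditive μ p E) (h_lsc : WeakLowerSemicontinuous μ p q E)
    {ξ η : Ω → ι → ℝ} (hξ : MemLp ξ p μ) (hη : MemLp η p μ) {i : ι}
    (hi : ∀ᵐ ω ∂μ, ξ ω i ≤ η ω i) : E ξ i ≤ E η i :=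
  calc E ξ i = E (fun ω j => η ω j + (ξ - η) ω j) i := by simp
    _ ≤ E η i + E (ξ - η) i := h_subadd η (ξ - η) hη (hξ.sub hη) i
    _ ≤ E η i := by
        refine add_le_of_nonpos_right
          (apply_nonpos_of_ae_apply_nonpos h_const h_mono h_lsc (hξ.sub hη) ?_)
        filter_upwards [hi] with ω hω
        simpa using hω

variable [DecidableEq ι]

variable (E) in
def marginal (i : ι) (β : Ω → ℝ) : ℝ :=
  E (fun ω => Pi.single i (β ω)) i

theorem apply_eq_marginal [IsFiniteMeasure μ] [p.HolderConjugate q]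
    (h_const : ∀ x, E (fun _ => x) = x) (h_mono : LpMonotone μ p E)
    (h_subadd : LpSubadditive μ p E) (h_lsc : WeakLowerSemicontinuous μ p q E)
    {ξ : Ω → ι → ℝ} (hξ : MemLp ξ p μ) (i : ι) : E ξ i = marginal E i (fun ω => ξ ω i) := by
  have hsingle := (hξ.eval i).piSingle i
  exact le_antisymm
    (apply_le_apply_of_ae_apply_le h_const h_mono h_subadd h_lsc hξ hsingle (by simp))
    (apply_le_apply_of_ae_apply_le h_const h_mono h_subadd h_lsc hsingle hξ (by simp))

end VectorExpectation

end

open VectorExpectation in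
/-- every `σ(L^p,L^q)`-lower semicontinuous vector-valued sublinear
expectation `ē : L^p(ℝ^d) → ℝ^d` marginalises: there are numerical sublinear expectations
`e₁, …, e_d` with `ē(ξ) = (e₁(ξ₁), …, e_d(ξ_d))`. -/
theorem vector_valued_sublinear_marginalises
    {Ω : Type*} [MeasurableSpace Ω] (μ : Measure Ω) [IsProbabilityMeasure μ]
    {d : ℕ} (p q : ℝ≥0∞) (hpq : 1/p + 1/q = 1)
    (ebar : (Ω → (Fin d → ℝ)) → (Fin d → ℝ))
    (h_const : ∀ x : Fin d → ℝ, ebar (fun _ => x) = x)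
    (h_mono : ∀ ξ η : Ω → (Fin d → ℝ), MemLp ξ p μ → MemLp η p μ →
      (∀ᵐ ω ∂μ, ∀ i, ξ ω i ≤ η ω i) → ∀ i, ebar ξ i ≤ ebar η i)
    (h_homog : ∀ (ξ : Ω → (Fin d → ℝ)), MemLp ξ p μ → ∀ c : ℝ, 0 ≤ c →
      ebar (fun ω i => c * ξ ω i) = fun i => c * ebar ξ i)
    (h_subadd : ∀ ξ η : Ω → (Fin d → ℝ), MemLp ξ p μ → MemLp η p μ →
      ∀ i, ebar (fun ω i => ξ ω i + η ω i) i ≤ ebar ξ i + ebar η i)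
    (h_lsc : ∀ (ξn : ℕ → (Ω → (Fin d → ℝ))) (ξ : Ω → (Fin d → ℝ)),
      (∀ n, MemLp (ξn n) p μ) → MemLp ξ p μ →
      (∀ ζ : Ω → (Fin d → ℝ), MemLp ζ q μ →
        Tendsto (fun n => ∫ ω, ∑ i, ξn n ω i * ζ ω i ∂μ) atTop
          (nhds (∫ ω, ∑ i, ξ ω i * ζ ω i ∂μ))) →
      ∀ i, ebar ξ i ≤ liminf (fun n => ebar (ξn n) i) atTop) :
    ∃ e : Fin d → ((Ω → ℝ) → ℝ),
      (∀ i,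
        (∀ a : ℝ, e i (fun _ => a) = a) ∧
        (∀ β γ : Ω → ℝ, MemLp β p μ → MemLp γ p μ → (∀ᵐ ω ∂μ, β ω ≤ γ ω) →
          e i β ≤ e i γ) ∧
        (∀ β : Ω → ℝ, MemLp β p μ → ∀ c : ℝ, 0 ≤ c →
          e i (fun ω => c * β ω) = c * e i β) ∧
        (∀ β γ : Ω → ℝ, MemLp β p μ → MemLp γ p μ →
          e i (fun ω => β ω + γ ω) ≤ e i β + e i γ)) ∧
      (∀ ξ : Ω → (Fin d → ℝ), MemLp ξ p μ →
        ebar ξ = fun i => e i (fun ω => ξ ω i)) := by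
  have : p.HolderConjugate q := ENNReal.holderConjugate_iff.2 (by simpa only [one_div] using hpq)
  refine ⟨marginal ebar, fun i => ⟨fun a => ?_, fun β γ hβ hγ hle => ?_, fun β hβ c hc => ?_,
    fun β γ hβ hγ => ?_⟩, fun ξ hξ => funext (apply_eq_marginal h_const h_mono h_subadd h_lsc hξ)⟩
  · simp [marginal, h_const]
  · exact apply_le_apply_of_ae_apply_le h_const h_mono h_subadd h_lsc (hβ.piSingle i)
      (hγ.piSingle i) (by simpa using hle)
  · simp_rw [marginal, ← smul_eq_mul, Pi.single_smul]
    exact congrFun (h_homog _ (hβ.piSingle i) c hc) i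
  · simp_rw [marginal, Pi.single_add]
    exact h_subadd _ _ (hβ.piSingle i) (hγ.piSingle i) i
end
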